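/- arXiv:0807.0314 — 3 statements merged into one kernel-verified Lean document; each statement's English description precedes it below -/
import Mathlib

section
/- Suppose (εₙ) is a sequence of nonzero real numbers with εₙ → 0, and for each n there is a T-periodic solution (αₙ, Aₙ) of the system with parameter ε = εₙ such that αₙ(t) − α₀(t) → c and Aₙ(t) → A₀ uniformly in t ∈ [0,T] for some constant c ∈ ℝ. Then M(−c/ω₀) = 0. In particular, if the subharmonic Melnikov function M has no zeroes, then no family of T-periodic solutions continuing the unperturbed solution exists. -/
open MeasureTheory intervalIntegral Real Filter

open Set Function

/-!
A periodic solution has `Aₙ(T) = Aₙ(0)`, so integrating `Ȧ = εₙ G` over a period and dividing by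
`εₙ ≠ 0` gives `∫₀ᵀ G(αₙ(t), Aₙ(t), t) dt = 0`. The curves `t ↦ (αₙ(t), Aₙ(t), t)` converge
uniformly on `[0, T]` to `t ↦ (ω₀ t + c, A₀, t)`, a compact set on which `G` is continuous, so the
integrands converge uniformly and `∫₀ᵀ G(ω₀ t + c, A₀, t) dt = 0`. Since `ω₀ T = 2πp` and
`T = 2πq`, this integrand is `T`-periodic, and the substitution `t ↦ t - c/ω₀` turns the integral
into `T · M(-c/ω₀)`.
-/

theorem TendstoUniformlyOn.comp_of_continuousAt {ι α β γ : Type*} [UniformSpace β]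
    [UniformSpace γ] {F : ι → α → β} {f : α → β} {l : Filter ι} {s : Set α} {g : β → γ}
    (h : TendstoUniformlyOn F f l s) (hs : IsCompact (f '' s))
    (hg : ∀ x ∈ f '' s, ContinuousAt g x) :
    TendstoUniformlyOn (fun i a => g (F i a)) (g ∘ f) l s := fun u hu => by
  filter_upwards [h _ (hs.uniformContinuousAt_of_continuousAt g hg hu)] with i hi a ha
  exact hi a ha (mem_image_of_mem f ha)

theorem TendstoUniformlyOn.prodMk_diag {ι α β γ : Type*} [UniformSpace β] [UniformSpace γ]
    {F : ι → α → β} {f : α → β} {F' : ι → α → γ} {f' : α → γ} {l : Filter ι} {s : Set α}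
    (h : TendstoUniformlyOn F f l s) (h' : TendstoUniformlyOn F' f' l s) :
    TendstoUniformlyOn (fun i a => (F i a, F' i a)) (fun a => (f a, f' a)) l s :=
  fun u hu => ((h.prodMk h') u hu).diag_of_prod

theorem tendstoUniformlyOn_const_self {ι α β : Type*} [UniformSpace β] (f : α → β)
    (l : Filter ι) (s : Set α) : TendstoUniformlyOn (fun (_ : ι) => f) f l s :=
  fun _ hu => Eventually.of_forall fun _ _ _ => refl_mem_uniformity hu

theorem intervalIntegral_eq_zero_of_hasDerivAt_const_mul {f g : ℝ → ℝ} {ε a b : ℝ} (hε : ε ≠ 0)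
    (hf : ∀ t ∈ uIcc a b, HasDerivAt f (ε * g t) t) (hg : IntervalIntegrable g volume a b)
    (hab : f a = f b) : ∫ t in a..b, g t = 0 := by
  have h := integral_eq_sub_of_hasDerivAt hf (hg.const_mul ε)
  rw [intervalIntegral.integral_const_mul, hab, sub_self] at h
  exact (mul_eq_zero.mp h).resolve_left hε

theorem intervalIntegral_eq_zero_of_tendstoUniformlyOn {ι E : Type*} [NormedAddCommGroup E]
    [NormedSpace ℝ E] {l : Filter ι} [l.NeBot] [l.IsCountablyGenerated] {F : ι → ℝ → E}
    {f : ℝ → E} {a b : ℝ} (hF : ∀ i, ContinuousOn (F i) (uIcc a b))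
    (hlim : TendstoUniformlyOn F f l (uIcc a b)) (hzero : ∀ i, ∫ t in a..b, F i t = 0) :
    ∫ t in a..b, f t = 0 := by
  have h := hlim.tendsto_intervalIntegral_of_continuousOn (μ := volume) (.of_forall hF)
  simp only [hzero] at h
  exact tendsto_nhds_unique h tendsto_const_nhds

theorem periodic_comp_mul_add_of_resonant {g : ℝ → ℝ → ℝ} {P T ω c : ℝ} {p q : ℤ}
    (h₁ : ∀ x y, g (x + P) y = g x y) (h₂ : ∀ x y, g x (y + P) = g x y)
    (hωT : ω * T = p * P) (hT : T = q * P) :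
    Periodic (fun u => g (ω * u + c) u) T := fun u => by
  have hx : Periodic (fun x => g x (u + T)) P := fun x => h₁ x _
  have hy : Periodic (g (ω * u + c)) P := fun y => h₂ _ y
  calc g (ω * (u + T) + c) (u + T) = g (ω * u + c + p * P) (u + T) := by
        rw [mul_add, hωT]; ring_nf
    _ = g (ω * u + c) (u + q * P) := by rw [← hT]; exact hx.int_mul p _
    _ = g (ω * u + c) u := hy.int_mul q u

theorem Function.Periodic.intervalIntegral_comp_mul_add {g : ℝ → ℝ → ℝ} {ω c T : ℝ} (hω : ω ≠ 0)
    (hper : Periodic (fun u => g (ω * u + c) u) T) :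
    ∫ t in (0:ℝ)..T, g (ω * t) (t + -c / ω) = ∫ u in (0:ℝ)..T, g (ω * u + c) u := by
  have hshift : (fun t => g (ω * t) (t + -c / ω)) =
      fun t => (fun u => g (ω * u + c) u) (t + -c / ω) := by
    funext t; congr 1; field_simp; ring
  rw [hshift, integral_comp_add_right (fun u => g (ω * u + c) u), zero_add, add_comm T,
    hper.intervalIntegral_add_eq (-c / ω) 0, zero_add]

theorem melnikov_necessary_condition_general
    (W : Set ℝ)
    (ω : ℝ → ℝ)
    (F G : ℝ → ℝ → ℝ → ℝ)
    (hG : AnalyticOnNhd ℝ (fun x : ℝ × ℝ × ℝ => G x.1 x.2.1 x.2.2)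
      {x : ℝ × ℝ × ℝ | x.2.1 ∈ W})
    (hGα : ∀ α A t, G (α + 2 * π) A t = G α A t)
    (hGt : ∀ α A t, G α A (t + 2 * π) = G α A t)
    (A₀ : ℝ) (hA₀ : A₀ ∈ W)
    (p q : ℤ) (hq : 1 ≤ q) (hp : p ≠ 0)
    (hω₀ : ω A₀ = (p : ℝ) / (q : ℝ))
    (T : ℝ) (hT : T = 2 * π * (q : ℝ))
    (M : ℝ → ℝ)
    (hM : ∀ s : ℝ, M s = (1 / T) * ∫ t in (0:ℝ)..T, G (ω A₀ * t) A₀ (t + s))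
    (εn : ℕ → ℝ) (hεn : ∀ n, εn n ≠ 0)
    (αn An : ℕ → ℝ → ℝ) (c : ℝ)
    (hrange : ∀ n t, An n t ∈ W)
    (hsolα : ∀ n, ∀ t : ℝ,
      HasDerivAt (αn n) (ω (An n t) + εn n * F (αn n t) (An n t) t) t)
    (hsolA : ∀ n, ∀ t : ℝ,
      HasDerivAt (An n) (εn n * G (αn n t) (An n t) t) t)
    (hperA : ∀ n, ∀ t : ℝ, An n (t + T) = An n t)
    (hconvα : TendstoUniformlyOn (fun n t => αn n t - ω A₀ * t) (fun _ => c)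
      atTop (Set.Icc 0 T))
    (hconvA : TendstoUniformlyOn (fun n t => An n t) (fun _ => A₀)
      atTop (Set.Icc 0 T)) :
    M (-c / ω A₀) = 0 := by
  have hq₀ : (0 : ℝ) < q := by exact_mod_cast hq
  have hTpos : 0 < T := by rw [hT]; positivity
  have hω₀ne : ω A₀ ≠ 0 := by rw [hω₀]; exact div_ne_zero (Int.cast_ne_zero.mpr hp) hq₀.ne'
  have hGcont : ∀ x : ℝ × ℝ × ℝ, x.2.1 ∈ W →
      ContinuousAt (fun x : ℝ × ℝ × ℝ => G x.1 x.2.1 x.2.2) x :=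
    fun x hx => (hG x hx).continuousAt
  have hcont : ∀ n, Continuous fun t => G (αn n t) (An n t) t := fun n =>
    continuous_iff_continuousAt.2 fun t => (hGcont _ (hrange n t)).comp <|
      ((hsolα n t).continuousAt.prodMk ((hsolA n t).continuousAt.prodMk continuousAt_id))
  have hzero : ∀ n, ∫ t in (0:ℝ)..T, G (αn n t) (An n t) t = 0 := fun n =>
    intervalIntegral_eq_zero_of_hasDerivAt_const_mul (hεn n) (fun t _ => hsolA n t)
      ((hcont n).intervalIntegrable _ _) (by simpa using (hperA n 0).symm)
  have hcurve : TendstoUniformlyOn (fun n t => (αn n t, An n t, t))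
      (fun t => (ω A₀ * t + c, A₀, t)) atTop (Icc 0 T) := by
    have hα : TendstoUniformlyOn αn (fun t => ω A₀ * t + c) atTop (Icc 0 T) := by
      convert hconvα.add (tendstoUniformlyOn_const_self (fun t => ω A₀ * t) atTop _) using 1
      · ext n t; simp
      · ext t; simp [add_comm]
    exact hα.prodMk_diag (hconvA.prodMk_diag (tendstoUniformlyOn_const_self id _ _))
  have hlim_zero : ∫ t in (0:ℝ)..T, G (ω A₀ * t + c) A₀ t = 0 := by
    refine intervalIntegral_eq_zero_of_tendstoUniformlyOn (l := atTop)
      (fun n => (hcont n).continuousOn) ?_ hzero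
    rw [uIcc_of_le hTpos.le]
    exact hcurve.comp_of_continuousAt (isCompact_Icc.image (by fun_prop))
      (by rintro _ ⟨t, -, rfl⟩; exact hGcont _ hA₀)
  have hper : Periodic (fun u => G (ω A₀ * u + c) A₀ u) T :=
    periodic_comp_mul_add_of_resonant (g := fun x y => G x A₀ y) (p := p) (q := q)
      (fun x y => hGα x A₀ y) (fun x y => hGt x A₀ y)
      (by rw [hω₀, hT]; field_simp) (by rw [hT]; ring)
  rw [hM, hper.intervalIntegral_comp_mul_add (g := fun x y => G x A₀ y) hω₀ne, hlim_zero,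
    mul_zero]

/-- Suppose `(εₙ)` is a sequence of nonzero real numbers with `εₙ → 0`,
and for each `n` there is a `T`-periodic solution `(αₙ, Aₙ)` of the system with parameter
`ε = εₙ` such that `αₙ(t) − α₀(t) → c` and `Aₙ(t) → A₀` uniformly in `t ∈ [0,T]` for some
constant `c ∈ ℝ`.  Then `M(−c/ω₀) = 0`.  (In particular, if the subharmonic Melnikov
function `M` has no zeroes, then no family of `T`-periodic solutions continuing the
unperturbed solution exists.) -/
theorem melnikov_necessary_condition
    (W : Set ℝ) (hW : IsOpen W)
    (ω : ℝ → ℝ) (hω : AnalyticOnNhd ℝ ω W)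
    (F G : ℝ → ℝ → ℝ → ℝ)
    (hF : AnalyticOnNhd ℝ (fun x : ℝ × ℝ × ℝ => F x.1 x.2.1 x.2.2)
      {x : ℝ × ℝ × ℝ | x.2.1 ∈ W})
    (hG : AnalyticOnNhd ℝ (fun x : ℝ × ℝ × ℝ => G x.1 x.2.1 x.2.2)
      {x : ℝ × ℝ × ℝ | x.2.1 ∈ W})
    (hFα : ∀ α A t, F (α + 2 * π) A t = F α A t)
    (hFt : ∀ α A t, F α A (t + 2 * π) = F α A t)
    (hGα : ∀ α A t, G (α + 2 * π) A t = G α A t)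
    (hGt : ∀ α A t, G α A (t + 2 * π) = G α A t)
    (A₀ : ℝ) (hA₀ : A₀ ∈ W)
    (p q : ℤ) (hq : 1 ≤ q) (hp : p ≠ 0) (hpq : Int.gcd p q = 1)
    (hω₀ : ω A₀ = (p : ℝ) / (q : ℝ))
    (T : ℝ) (hT : T = 2 * π * (q : ℝ))
    (M : ℝ → ℝ)
    (hM : ∀ s : ℝ, M s = (1 / T) * ∫ t in (0:ℝ)..T, G (ω A₀ * t) A₀ (t + s))
    (εn : ℕ → ℝ) (hεn : ∀ n, εn n ≠ 0) (hεlim : Tendsto εn atTop (nhds 0))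
    (αn An : ℕ → ℝ → ℝ) (c : ℝ)
    (hrange : ∀ n t, An n t ∈ W)
    (hsolα : ∀ n, ∀ t : ℝ,
      HasDerivAt (αn n) (ω (An n t) + εn n * F (αn n t) (An n t) t) t)
    (hsolA : ∀ n, ∀ t : ℝ,
      HasDerivAt (An n) (εn n * G (αn n t) (An n t) t) t)
    (hperα : ∀ n, ∀ t : ℝ, αn n (t + T) = αn n t + 2 * π * (p : ℝ))
    (hperA : ∀ n, ∀ t : ℝ, An n (t + T) = An n t)
    (hconvα : TendstoUniformlyOn (fun n t => αn n t - ω A₀ * t) (fun _ => c)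
      atTop (Set.Icc 0 T))
    (hconvA : TendstoUniformlyOn (fun n t => An n t) (fun _ => A₀)
      atTop (Set.Icc 0 T)) :
    M (-c / ω A₀) = 0 :=
  melnikov_necessary_condition_general W ω F G hG hGα hGt A₀ hA₀ p q hq hp hω₀ T hT M hM εn hεn αn
    An c hrange hsolα hsolA hperA hconvα hconvA
end

section
/- Let 𝔥 and 𝔭 be coprime positive integers, set μ = 𝔥/𝔭 ∈ ℚ, and let 𝔯 ∈ ℚ. Let P(c) = Σ_{j=0}^{d} Q_j cʲ ∈ ℝ[c] be a polynomial of degree d ≥ 1 (so Q_d ≠ 0) whose support lies on the line k + μ j = 𝔯, i.e. for every j with Q_j ≠ 0 there exists a natural number k with k + μ j = 𝔯. If P(c) = R (c − c₀)^d for some R ≠ 0 and some c₀ ≠ 0 (that is, P has a root of multiplicity equal to its degree at a nonzero point), then μ is a positive integer, i.e. 𝔭 = 1. -/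
open Polynomial

/-! Since `c₀ ≠ 0`, both the constant and the linear coefficient of `R (c - c₀)^d` are nonzero,
so the indices `j = 0` and `j = 1` both lie on the line `k + μ j = 𝔯`. Subtracting the two
equations shows that `μ = 𝔥 / 𝔭` is an integer, which for coprime `𝔥, 𝔭` forces `𝔭 = 1`. -/

theorem Polynomial.coeff_X_sub_C_pow_ne_zero {K : Type*} [CommRing K] [IsDomain K] [CharZero K]
    {a : K} (ha : a ≠ 0) {n k : ℕ} (hk : k ≤ n) : ((X - C a) ^ n).coeff k ≠ 0 := by
  rw [sub_eq_add_neg, ← C_neg, coeff_X_add_C_pow]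
  exact mul_ne_zero (pow_ne_zero _ (neg_ne_zero.2 ha)) (Nat.cast_ne_zero.2 (Nat.choose_pos hk).ne')

theorem Rat.eq_intCast_of_add_mul_eq_of_add_mul_succ_eq {μ r : ℚ} {j k₀ k₁ : ℕ}
    (h₀ : (k₀ : ℚ) + μ * j = r) (h₁ : (k₁ : ℚ) + μ * (j + 1 : ℕ) = r) :
    μ = ((k₀ - k₁ : ℤ) : ℚ) := by
  push_cast at h₁ ⊢
  linarith

theorem Nat.eq_one_of_coprime_of_den_div_eq_one {m n : ℕ} (hn : n ≠ 0) (hcop : m.Coprime n)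
    (hden : ((m : ℚ) / n).den = 1) : n = 1 :=
  hcop.symm.eq_one_of_dvd ((Rat.den_div_natCast_eq_one_iff m n hn).1 hden)

theorem slope_integer_of_full_multiplicity_general
    (𝔥 𝔭 : ℕ) (h𝔭 : 0 < 𝔭) (hcop : Nat.Coprime 𝔥 𝔭)
    (μ : ℚ) (hμ : μ = (𝔥 : ℚ) / (𝔭 : ℚ)) (𝔯 : ℚ)
    (P : Polynomial ℝ) (d : ℕ) (hd1 : 1 ≤ d)
    (hsupp : ∀ j : ℕ, P.coeff j ≠ 0 → ∃ k : ℕ, (k : ℚ) + μ * (j : ℚ) = 𝔯)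
    (R c₀ : ℝ) (hR : R ≠ 0) (hc₀ : c₀ ≠ 0)
    (hP : P = Polynomial.C R * (Polynomial.X - Polynomial.C c₀) ^ d) :
    𝔭 = 1 := by
  have hcoeff : ∀ j ≤ d, P.coeff j ≠ 0 := fun j hj => by
    rw [hP, coeff_C_mul]
    exact mul_ne_zero hR (coeff_X_sub_C_pow_ne_zero hc₀ hj)
  obtain ⟨k₀, hk₀⟩ := hsupp 0 (hcoeff 0 (Nat.zero_le d))
  obtain ⟨k₁, hk₁⟩ := hsupp 1 (hcoeff 1 hd1)
  have hμint := Rat.eq_intCast_of_add_mul_eq_of_add_mul_succ_eq hk₀ hk₁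
  refine Nat.eq_one_of_coprime_of_den_div_eq_one h𝔭.ne' hcop ?_
  rw [← hμ, hμint, Rat.den_intCast]

/-- Lemma 6 of the paper. Let `𝔥` and `𝔭` be coprime positive integers,
set `μ = 𝔥/𝔭 ∈ ℚ`, and let `𝔯 ∈ ℚ`. Let `P(c) ∈ ℝ[c]` be a polynomial of degree `d ≥ 1`
whose support lies on the line `k + μ j = 𝔯`, i.e. for every `j` with `P.coeff j ≠ 0` there is
a natural number `k` with `k + μ j = 𝔯`. If `P(c) = R (c - c₀)^d` for some `R ≠ 0` and
some `c₀ ≠ 0`, then `μ` is a positive integer, i.e. `𝔭 = 1`. -/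
theorem slope_integer_of_full_multiplicity
    (𝔥 𝔭 : ℕ) (h𝔥 : 0 < 𝔥) (h𝔭 : 0 < 𝔭) (hcop : Nat.Coprime 𝔥 𝔭)
    (μ : ℚ) (hμ : μ = (𝔥 : ℚ) / (𝔭 : ℚ)) (𝔯 : ℚ)
    (P : Polynomial ℝ) (d : ℕ) (hd : d = P.natDegree) (hd1 : 1 ≤ d)
    (hsupp : ∀ j : ℕ, P.coeff j ≠ 0 → ∃ k : ℕ, (k : ℚ) + μ * (j : ℚ) = 𝔯)
    (R c₀ : ℝ) (hR : R ≠ 0) (hc₀ : c₀ ≠ 0)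
    (hP : P = Polynomial.C R * (Polynomial.X - Polynomial.C c₀) ^ d) :
    𝔭 = 1 :=
  slope_integer_of_full_multiplicity_general 𝔥 𝔭 h𝔭 hcop μ hμ 𝔯 P d hd1 hsupp R c₀ hR hc₀ hP
end

section
/- Consider finite rooted trees in which every vertex is either a node or a leaf, leaves have no children, the root is a node, and every node v carries a label b_v ∈ {0,1} subject to the constraint: every node with b_v = 0 has at least two children, none of which is a leaf. For such a tree θ, let k(θ) be the number of nodes with label b = 1 and j(θ) the number of leaves. Then the total number of vertices satisfies |V(θ)| ≤ 2 k(θ) + j(θ) − 1. -/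
/-- A finite rooted tree in which every vertex is either a node (carrying a badge label
`b ∈ {0,1}`, encoded as a `Bool`) or a leaf, and leaves have no children. -/
inductive BadgeTree : Type
  | leaf : BadgeTree
  | node : Bool → List BadgeTree → BadgeTree

namespace BadgeTree

/-- Total number of vertices of the tree. -/
def numVertices : BadgeTree → ℕ
  | .leaf => 1
  | .node _ ts => 1 + (ts.attach.map fun t => numVertices t.1).sum
  decreasing_by simp_wf; have := List.sizeOf_lt_of_mem t.2; omega

/-- Number of leaves of the tree. -/
def numLeaves : BadgeTree → ℕ
  | .leaf => 1
  | .node _ ts => (ts.attach.map fun t => numLeaves t.1).sum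
  decreasing_by simp_wf; have := List.sizeOf_lt_of_mem t.2; omega

/-- The order `k(θ)`: the number of nodes with badge label `b = 1` (`true`). -/
def order : BadgeTree → ℕ
  | .leaf => 0
  | .node b ts => (if b then 1 else 0) + (ts.attach.map fun t => order t.1).sum
  decreasing_by simp_wf; have := List.sizeOf_lt_of_mem t.2; omega

/-- The admissibility constraint: every node with badge label `b = 0` (`false`) has at
least two children, none of which is a leaf. -/
inductive Valid : BadgeTree → Prop
  | leaf : Valid .leaf
  | node (b : Bool) (ts : List BadgeTree)
      (hb : b = false → 2 ≤ ts.length ∧ ∀ t ∈ ts, t ≠ BadgeTree.leaf)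
      (hts : ∀ t ∈ ts, Valid t) : Valid (.node b ts)

end BadgeTree

/-!
By induction, an admissible tree whose root is a node satisfies `|V| + 1 ≤ 2k + j`, hence every
admissible tree satisfies `|V| ≤ 2k + j` (a leaf has `|V| = j = 1`). At a node labelled 1, the
weak bounds of the children suffice, the node's own contribution `2` to `2k` paying for the node
and for the `+ 1`. At a node labelled 0 all `n ≥ 2` children are nodes, so their sharp bounds gain
`n ≥ 2`, again enough for the node and the `+ 1`.
-/

namespace BadgeTree

theorem numVertices_node (b : Bool) (ts : List BadgeTree) :
    (node b ts).numVertices = 1 + (ts.map numVertices).sum := by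
  rw [numVertices, List.attach_map_val]

theorem numLeaves_node (b : Bool) (ts : List BadgeTree) :
    (node b ts).numLeaves = (ts.map numLeaves).sum := by
  rw [numLeaves, List.attach_map_val]

theorem order_node (b : Bool) (ts : List BadgeTree) :
    (node b ts).order = (if b then 1 else 0) + (ts.map order).sum := by
  rw [order, List.attach_map_val]

theorem numVertices_le_of_ne_leaf_imp {t : BadgeTree}
    (h : t ≠ leaf → t.numVertices + 1 ≤ 2 * t.order + t.numLeaves) :
    t.numVertices ≤ 2 * t.order + t.numLeaves := by
  cases t with
  | leaf => simp [numVertices, numLeaves, order]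
  | node b ts => exact Nat.le_of_succ_le (h nofun)

theorem Valid.numVertices_add_one_le {t : BadgeTree} (ht : t.Valid) :
    t ≠ .leaf → t.numVertices + 1 ≤ 2 * t.order + t.numLeaves := by
  induction ht with
  | leaf => exact fun h => (h rfl).elim
  | node b ts hb _ ih =>
    intro _
    rw [numVertices_node, order_node, numLeaves_node]
    cases b with
    | false =>
      obtain ⟨hlen, hnoLeaf⟩ := hb rfl
      have hsum := List.sum_le_sum fun t ht => ih t ht (hnoLeaf t ht)
      simp only [List.sum_map_add, List.sum_map_mul_left, List.map_const', List.sum_replicate,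
        smul_eq_mul, mul_one] at hsum
      simp only [Bool.false_eq_true, if_false]
      omega
    | true =>
      have hsum := List.sum_le_sum (f := numVertices) fun t ht =>
        numVertices_le_of_ne_leaf_imp (ih t ht)
      simp only [List.sum_map_add, List.sum_map_mul_left] at hsum
      simp only [if_true]
      omega

end BadgeTree

/-- Lemma 10 of the paper.  For every finite rooted tree `θ` as above
whose root is a node and which satisfies the constraint that every node with badge label
`0` has at least two children, none of which is a leaf, the total number of vertices
satisfies `|V(θ)| ≤ 2 k(θ) + j(θ) − 1`, where `k(θ)` is the number of nodes with badge
label `1` and `j(θ)` is the number of leaves. -/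
theorem badgeTree_vertex_bound (b : Bool) (ts : List BadgeTree)
    (hvalid : BadgeTree.Valid (BadgeTree.node b ts)) :
    ((BadgeTree.node b ts).numVertices : ℤ) ≤
      2 * ((BadgeTree.node b ts).order : ℤ) + ((BadgeTree.node b ts).numLeaves : ℤ) - 1 := by
  have h := hvalid.numVertices_add_one_le (by simp)
  omega
end
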